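/- Let n ≥ 2 and let G be an additive subgroup of ℝ. Then the set X = G ∩ (0,∞) has Property (W_n): for every n-dimensional box P and every partition of P into boxes each of which has a side with length in X, the box P has a side with length in X. -/
import Mathlib


open BoxIntegral

/-- The (closed) set of points of an `n`-dimensional box. -/
def boxSet {n : ℕ} (B : Box (Fin n)) : Set (Fin n → ℝ) :=
  Set.Icc B.lower B.upper

/-- The box `B` has a side whose length belongs to `X`. -/
def hasSideIn {n : ℕ} (X : Set ℝ) (B : Box (Fin n)) : Prop :=
  ∃ i : Fin n, B.upper i - B.lower i ∈ X

/-- `Q` is a partition of `P`: a finite collection of boxes with pairwise disjoint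
interiors whose union is `P`. -/
def isBoxPartition {n k : ℕ} (P : Box (Fin n)) (Q : Fin k → Box (Fin n)) : Prop :=
  (∀ j j' : Fin k, j ≠ j' →
    Disjoint (interior (boxSet (Q j))) (interior (boxSet (Q j')))) ∧
  (⋃ j, boxSet (Q j)) = boxSet P

/-- Property (W_n): for every `n`-dimensional box `P` and every partition of `P`
such that each constituent box has a side with length in `X`, the box `P` itself
has a side with length in `X`. -/
def PropertyW (n : ℕ) (X : Set ℝ) : Prop :=
  ∀ (P : Box (Fin n)) (k : ℕ) (Q : Fin k → Box (Fin n)),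
    isBoxPartition P Q → (∀ j, hasSideIn X (Q j)) → hasSideIn X P

/-- A choice of coset representatives for `G`: `gRep G a = gRep G b ↔ a - b ∈ G`. -/
noncomputable def gRep (G : AddSubgroup ℝ) (x : ℝ) : ℝ :=
  (QuotientAddGroup.mk (s := G) x).out

lemma gRep_eq_iff (G : AddSubgroup ℝ) {a b : ℝ} :
    gRep G a = gRep G b ↔ a - b ∈ G := by
  rw [gRep, gRep, Quotient.out_inj, QuotientAddGroup.eq_iff_sub_mem]

/-- The multiplicative weight of a box. -/
noncomputable def gWeight {n : ℕ} (G : AddSubgroup ℝ) (B : Box (Fin n)) : ℝ :=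
  ∏ i, (gRep G (B.upper i) - gRep G (B.lower i))

/-- `gWeight` is box-additive. -/
noncomputable def gWeightBAM (n : ℕ) (G : AddSubgroup ℝ) :
    BoxAdditiveMap (Fin n) ℝ ⊤ :=
  BoxAdditiveMap.ofMapSplitAdd (gWeight G) ⊤ (by
    classical
    intro I _ i x hx
    rw [Box.splitLower_def hx, Box.splitUpper_def hx]
    show gWeight G _ + gWeight G _ = gWeight G I
    unfold gWeight
    rw [← Finset.mul_prod_erase Finset.univ _ (Finset.mem_univ i),
      ← Finset.mul_prod_erase Finset.univ _ (Finset.mem_univ i),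
      ← Finset.mul_prod_erase Finset.univ
        (fun i' => gRep G (I.upper i') - gRep G (I.lower i')) (Finset.mem_univ i)]
    have h1 : ∀ j ∈ Finset.univ.erase i,
        gRep G (Function.update I.upper i x j) - gRep G (I.lower j)
          = gRep G (I.upper j) - gRep G (I.lower j) := by
      intro j hj
      rw [Function.update_of_ne (Finset.mem_erase.1 hj).1]
    have h2 : ∀ j ∈ Finset.univ.erase i,
        gRep G (I.upper j) - gRep G (Function.update I.lower i x j)
          = gRep G (I.upper j) - gRep G (I.lower j) := by
      intro j hj
      rw [Function.update_of_ne (Finset.mem_erase.1 hj).1]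
    rw [Finset.prod_congr rfl h1, Finset.prod_congr rfl h2]
    simp only [Function.update_self]
    ring)

lemma gWeightBAM_apply (n : ℕ) (G : AddSubgroup ℝ) (B : Box (Fin n)) :
    gWeightBAM n G B = gWeight G B := rfl

lemma interior_boxSet {n : ℕ} (B : Box (Fin n)) :
    interior (boxSet B) = Set.pi Set.univ fun i => Set.Ioo (B.lower i) (B.upper i) := by
  rw [boxSet, ← Set.pi_univ_Icc, interior_pi_set Set.finite_univ]
  simp [interior_Icc]

/-- If `x` belongs to two boxes in the half-open sense, their interiors intersect. -/
lemma exists_common_interior {n : ℕ} (B₁ B₂ : Box (Fin n)) {x : Fin n → ℝ}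
    (h₁ : x ∈ B₁) (h₂ : x ∈ B₂) :
    ∃ y, y ∈ interior (boxSet B₁) ∧ y ∈ interior (boxSet B₂) := by
  refine ⟨fun i => x i - min (x i - B₁.lower i) (x i - B₂.lower i) / 2, ?_, ?_⟩ <;>
  · rw [interior_boxSet]
    intro i _
    obtain ⟨hl₁, hu₁⟩ := h₁ i
    obtain ⟨hl₂, hu₂⟩ := h₂ i
    have hm1 := min_le_left (x i - B₁.lower i) (x i - B₂.lower i)
    have hm2 := min_le_right (x i - B₁.lower i) (x i - B₂.lower i)
    have hmpos : 0 < min (x i - B₁.lower i) (x i - B₂.lower i) :=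
      lt_min (by linarith) (by linarith)
    constructor <;> dsimp only <;> linarith

theorem subgroup_pos_propertyW (n : ℕ) (hn : 2 ≤ n) (G : AddSubgroup ℝ) :
    PropertyW n {x : ℝ | x ∈ G ∧ 0 < x} := by
  classical
  intro P k Q hpart hsides
  have hQle : ∀ j, Q j ≤ P := by
    intro j
    have hsub : boxSet (Q j) ⊆ boxSet P := by
      rw [← hpart.2]; exact Set.subset_iUnion (fun j => boxSet (Q j)) j
    have hl : (Q j).lower ∈ boxSet P :=
      hsub ⟨le_refl _, fun i => ((Q j).lower_lt_upper i).le⟩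
    have hu : (Q j).upper ∈ boxSet P :=
      hsub ⟨fun i => ((Q j).lower_lt_upper i).le, le_refl _⟩
    exact Box.le_iff_bounds.2 ⟨hl.1, hu.2⟩
  set π : Prepartition P :=
    { boxes := Finset.univ.image Q
      le_of_mem' := by
        intro J hJ
        obtain ⟨j, _, rfl⟩ := Finset.mem_image.1 hJ
        exact hQle j
      pairwiseDisjoint := by
        intro J₁ hJ₁ J₂ hJ₂ hne
        obtain ⟨j₁, _, rfl⟩ := Finset.mem_image.1 hJ₁
        obtain ⟨j₂, _, rfl⟩ := Finset.mem_image.1 hJ₂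
        have hjj : j₁ ≠ j₂ := fun h => hne (by rw [h])
        rw [Function.onFun, Set.disjoint_left]
        intro x hx₁ hx₂
        obtain ⟨y, hy₁, hy₂⟩ := exists_common_interior (Q j₁) (Q j₂) hx₁ hx₂
        exact Set.disjoint_left.1 (hpart.1 j₁ j₂ hjj) hy₁ hy₂ } with hπdef
  have hπ : π.IsPartition := by
    intro x hx
    set c : ℝ → (Fin n → ℝ) := fun t i => x i - t with hc
    have hcont : Continuous c := by
      apply continuous_pi
      intro i
      exact continuous_const.sub continuous_id
    set U : Ultrafilter ℝ := Ultrafilter.of (nhdsWithin 0 (Set.Ioi 0)) with hU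
    have hUle : (U : Filter ℝ) ≤ nhdsWithin 0 (Set.Ioi 0) := Ultrafilter.of_le _
    have hev : ∀ᶠ t in nhdsWithin (0:ℝ) (Set.Ioi 0), 0 < t ∧ c t ∈ boxSet P := by
      have h1 : ∀ᶠ t in nhdsWithin (0:ℝ) (Set.Ioi 0), t ∈ Set.Ioi (0:ℝ) :=
        eventually_mem_nhdsWithin
      have h2 : ∀ᶠ t in nhdsWithin (0:ℝ) (Set.Ioi 0), ∀ i, t < x i - P.lower i := by
        rw [Filter.eventually_all]
        intro i
        have hpos : (0:ℝ) < x i - P.lower i := sub_pos.2 (hx i).1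
        exact Filter.Eventually.filter_mono nhdsWithin_le_nhds
          (Filter.Tendsto.eventually_lt_const hpos Filter.tendsto_id)
      filter_upwards [h1, h2] with t ht h't
      have htpos : (0:ℝ) < t := ht
      refine ⟨htpos, fun i => ?_, fun i => ?_⟩
      · have h := h't i
        have hgoal : P.lower i ≤ x i - t := by linarith
        exact hgoal
      · have h := (hx i).2
        have hgoal : x i - t ≤ P.upper i := by linarith
        exact hgoal
    have hmem : (⋃ j : Fin k, {t : ℝ | 0 < t ∧ c t ∈ boxSet (Q j)}) ∈ U := by
      apply Filter.mem_of_superset (hUle hev)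
      intro t ht
      have hcup : c t ∈ ⋃ j, boxSet (Q j) := by rw [hpart.2]; exact ht.2
      obtain ⟨j, hj⟩ := Set.mem_iUnion.1 hcup
      exact Set.mem_iUnion.2 ⟨j, ht.1, hj⟩
    have : ∃ j : Fin k, {t : ℝ | 0 < t ∧ c t ∈ boxSet (Q j)} ∈ U := by
      have := (Ultrafilter.finite_biUnion_mem_iff (f := U)
        (is := (Set.univ : Set (Fin k)))
        (s := fun j => {t : ℝ | 0 < t ∧ c t ∈ boxSet (Q j)}) Set.finite_univ).1
        (by simpa using hmem)
      obtain ⟨j, _, hj⟩ := this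
      exact ⟨j, hj⟩
    obtain ⟨j, hSj⟩ := this
    have htends : Filter.Tendsto c (U : Filter ℝ) (nhds x) := by
      have h0 : Filter.Tendsto c (nhds (0:ℝ)) (nhds (c 0)) := hcont.tendsto 0
      have hc0 : c 0 = x := by funext i; simp [hc]
      rw [hc0] at h0
      exact h0.mono_left (hUle.trans nhdsWithin_le_nhds)
    have hclosed : IsClosed (boxSet (Q j)) := isClosed_Icc
    have hxmem : x ∈ boxSet (Q j) := by
      refine hclosed.mem_of_tendsto htends ?_
      exact Filter.mem_of_superset hSj fun t ht => ht.2
    obtain ⟨t₀, ht₀pos, ht₀⟩ := Ultrafilter.nonempty_of_mem hSj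
    refine ⟨Q j, Finset.mem_image.2 ⟨j, Finset.mem_univ j, rfl⟩, fun i => ?_⟩
    constructor
    · have := ht₀.1 i
      simp only [hc] at this
      linarith
    · exact hxmem.2 i
  have hsum := (gWeightBAM n G).sum_partition_boxes le_top hπ
  have hzero : ∀ J ∈ π.boxes, gWeightBAM n G J = 0 := by
    intro J hJ
    obtain ⟨j, _, rfl⟩ := Finset.mem_image.1 hJ
    obtain ⟨i, hi⟩ := hsides j
    rw [gWeightBAM_apply]
    exact Finset.prod_eq_zero (Finset.mem_univ i)
      (by rw [sub_eq_zero, gRep_eq_iff]; exact hi.1)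
  rw [Finset.sum_eq_zero hzero] at hsum
  have hP0 : gWeight G P = 0 := by rw [← gWeightBAM_apply n G P, ← hsum]
  obtain ⟨i, _, hi⟩ := Finset.prod_eq_zero_iff.1 hP0
  exact ⟨i, (gRep_eq_iff G).1 (sub_eq_zero.1 hi), sub_pos.2 (P.lower_lt_upper i)⟩
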